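/- arXiv:1408.4231 — 8 statements merged into one kernel-verified Lean document; each statement's English description precedes it below -/
import Mathlib

section
/- Let F be a field, f ∈ F[X₁,…,Xₙ] and g ∈ F[Y₁,…,Yₘ] non-constant polynomials, and c ∈ F nonzero. If g is square-free in the polynomial ring over the algebraic closure of F, then the polynomial h(X,Y) = f(X)·g(Y) + c is absolutely irreducible (i.e. irreducible over the algebraic closure of F). -/
/-!
View `h = f(X)·g(Y) + c` as a polynomial in `X` over the UFD `R = K[Y]`. A factor of `h` that is
constant in `X` divides every coefficient `f_d·g + [d = 0]·c`, hence `g` and `c`, so it is a unit.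
Modulo a prime factor `r` of `g`, `h` becomes the unit `c`, so every factor of `h` is constant in
`X` modulo `r`: its leading coefficient (for any monomial order) is divisible by `r` unless it is
constant in `X`. Hence a factorization into two non-constant factors makes `r²` divide the leading
coefficient `lc(f)·g` of `h`, contradicting that `g` is square-free.
-/

open MvPolynomial

namespace MvPolynomial

variable {σ τ K R : Type*}

theorem totalDegree_map_of_injective [CommSemiring R] [CommSemiring K] {φ : R →+* K}
    (hφ : Function.Injective φ) (p : MvPolynomial σ R) :
    (map φ p).totalDegree = p.totalDegree := by
  rw [totalDegree, totalDegree, support_map_of_injective _ hφ]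

theorem exists_coeff_ne_zero_of_totalDegree_ne_zero [CommSemiring R] {p : MvPolynomial σ R}
    (hp : p.totalDegree ≠ 0) : ∃ d ≠ 0, p.coeff d ≠ 0 := by
  classical
  contrapose! hp
  rw [totalDegree_eq_zero_iff_eq_C]
  ext d
  by_cases hd : d = 0
  · simp [hd]
  · rw [hp d hd, coeff_C, if_neg (Ne.symm hd)]

theorem coeff_eq_zero_of_isUnit [CommRing R] [IsReduced R] {p : MvPolynomial σ R} (hp : IsUnit p)
    {d : σ →₀ ℕ} (hd : d ≠ 0) : p.coeff d = 0 :=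
  ((isUnit_iff.mp hp).2 d hd).eq_zero

theorem dvd_coeff_of_dvd_mul_C_add_C [CommRing R] {r g c : R} (hr : Prime r) (hrg : r ∣ g)
    (hc : IsUnit c) {F A : MvPolynomial σ R} (hA : A ∣ F * C g + C c) {d : σ →₀ ℕ}
    (hd : d ≠ 0) : r ∣ A.coeff d := by
  have : (Ideal.span {r}).IsPrime := (Ideal.span_singleton_prime hr.ne_zero).mpr hr
  let π := Ideal.Quotient.mk (Ideal.span {r})
  have hunit : IsUnit (map π (F * C g + C c)) := by
    rw [map_add, map_mul, map_C, map_C,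
      Ideal.Quotient.eq_zero_iff_mem.mpr (Ideal.mem_span_singleton.mpr hrg), C_0, mul_zero,
      zero_add]
    exact (hc.map π).map C
  have hAd := coeff_eq_zero_of_isUnit (isUnit_of_dvd_unit (map_dvd (map π) hA) hunit) hd
  rwa [coeff_map, Ideal.Quotient.eq_zero_iff_mem, Ideal.mem_span_singleton] at hAd

section FieldCoefficients

variable [Field K] [CommRing R] [Algebra K R] {f : MvPolynomial σ K} {g c : R}

theorem coeff_map_mul_C_add_C_of_ne_zero {d : σ →₀ ℕ} (hd : d ≠ 0) :
    (map (algebraMap K R) f * C g + C c).coeff d = algebraMap K R (f.coeff d) * g := by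
  classical
  rw [coeff_add, mul_comm (map _ f), coeff_C_mul, coeff_map, coeff_C, if_neg (Ne.symm hd), add_zero,
    mul_comm]

theorem coeff_zero_map_mul_C_add_C :
    (map (algebraMap K R) f * C g + C c).coeff 0 = algebraMap K R (f.coeff 0) * g + c := by
  rw [coeff_add, mul_comm (map _ f), coeff_C_mul, coeff_map, coeff_zero_C, mul_comm g]

theorem dvd_of_dvd_coeff_map_mul_C_add_C {s : R} {d : σ →₀ ℕ} (hd : d ≠ 0)
    (hne : (map (algebraMap K R) f * C g + C c).coeff d ≠ 0)
    (hs : s ∣ (map (algebraMap K R) f * C g + C c).coeff d) : s ∣ g := by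
  rw [coeff_map_mul_C_add_C_of_ne_zero hd] at hne hs
  have hfd : f.coeff d ≠ 0 := fun h => hne (by rw [h, map_zero, zero_mul])
  exact ((Ne.isUnit hfd).map (algebraMap K R)).dvd_mul_left.mp hs

variable [IsDomain R]

theorem coeff_map_mul_C_add_C_ne_zero {d : σ →₀ ℕ} (hd : d ≠ 0) (hfd : f.coeff d ≠ 0)
    (hg : g ≠ 0) : (map (algebraMap K R) f * C g + C c).coeff d ≠ 0 := by
  rw [coeff_map_mul_C_add_C_of_ne_zero hd]
  exact mul_ne_zero ((map_ne_zero _).mpr hfd) hg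

theorem isUnit_of_dvd_map_mul_C_add_C (hf : f.totalDegree ≠ 0) (hg : g ≠ 0) (hc : IsUnit c)
    {A : MvPolynomial σ R} (hA : A ∣ map (algebraMap K R) f * C g + C c)
    (hA0 : A.totalDegree = 0) : IsUnit A := by
  rw [totalDegree_eq_zero_iff_eq_C] at hA0
  rw [hA0, C_dvd_iff_dvd_coeff] at hA
  rw [hA0]
  obtain ⟨d, hd, hfd⟩ := exists_coeff_ne_zero_of_totalDegree_ne_zero hf
  have hdvd_g : A.coeff 0 ∣ g :=
    dvd_of_dvd_coeff_map_mul_C_add_C hd (coeff_map_mul_C_add_C_ne_zero hd hfd hg) (hA d)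
  have hdvd_c := hA 0
  rw [coeff_zero_map_mul_C_add_C, dvd_add_right (hdvd_g.mul_left _)] at hdvd_c
  exact (isUnit_of_dvd_unit hdvd_c hc).map C

theorem irreducible_map_mul_C_add_C [UniqueFactorizationMonoid R] (hf : f.totalDegree ≠ 0)
    (hg : ¬IsUnit g) (hsf : Squarefree g) (hc : IsUnit c) :
    Irreducible (map (algebraMap K R) f * C g + C c) := by
  obtain ⟨d, hd, hfd⟩ := exists_coeff_ne_zero_of_totalDegree_ne_zero hf
  have hne := coeff_map_mul_C_add_C_ne_zero (c := c) hd hfd hsf.ne_zero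
  refine ⟨fun hu => hne (coeff_eq_zero_of_isUnit hu hd), fun A B hAB => ?_⟩
  by_cases hA : A.totalDegree = 0
  · exact .inl (isUnit_of_dvd_map_mul_C_add_C hf hsf.ne_zero hc (hAB ▸ dvd_mul_right A B) hA)
  by_cases hB : B.totalDegree = 0
  · exact .inr (isUnit_of_dvd_map_mul_C_add_C hf hsf.ne_zero hc (hAB ▸ dvd_mul_left B A) hB)
  exfalso
  obtain ⟨r, hr, hrg⟩ := WfDvdMonoid.exists_irreducible_factor hg hsf.ne_zero
  obtain ⟨_, _⟩ := exists_wellFoundedGT σ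
  let m : MonomialOrder σ := .degLex
  have hr_dvd_lc {P : MvPolynomial σ R} (hP : P ∣ A * B) (hP0 : P.totalDegree ≠ 0) :
      r ∣ m.leadingCoeff P :=
    dvd_coeff_of_dvd_mul_C_add_C hr.prime hrg hc (hAB ▸ hP)
      (m.degree_eq_zero_iff_totalDegree_eq_zero.not.mpr hP0)
  have hAB0 : A * B ≠ 0 := by
    rw [← hAB]
    exact fun h0 => hne (by rw [h0, coeff_zero])
  have hdeg : m.degree (A * B) ≠ 0 := by
    rw [ne_eq, m.degree_eq_zero_iff_totalDegree_eq_zero,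
      totalDegree_mul_of_isDomain (left_ne_zero_of_mul hAB0) (right_ne_zero_of_mul hAB0)]
    omega
  have hrr : r * r ∣ (A * B).coeff (m.degree (A * B)) := by
    rw [← MonomialOrder.leadingCoeff, m.leadingCoeff_mul]
    exact mul_dvd_mul (hr_dvd_lc (dvd_mul_right A B) hA) (hr_dvd_lc (dvd_mul_left B A) hB)
  rw [← hAB] at hrr hdeg hAB0
  exact hr.not_isUnit
    (hsf r (dvd_of_dvd_coeff_map_mul_C_add_C hdeg (m.coeff_degree_ne_zero_iff.mpr hAB0) hrr))

end FieldCoefficients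

theorem irreducible_rename_inl_mul_rename_inr_add_C [Field K] {f : MvPolynomial σ K}
    {g : MvPolynomial τ K} {c : K} (hf : f.totalDegree ≠ 0) (hg : g.totalDegree ≠ 0)
    (hsf : Squarefree g) (hc : c ≠ 0) :
    Irreducible (rename Sum.inl f * rename Sum.inr g + C c : MvPolynomial (σ ⊕ τ) K) := by
  have hf' : sumAlgEquiv K σ τ (rename Sum.inl f) = map (algebraMap K _) f :=
    DFunLike.congr_fun (sumAlgEquiv_comp_rename_inl K σ τ) f
  have hg' : sumAlgEquiv K σ τ (rename Sum.inr g) = C g :=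
    DFunLike.congr_fun (sumAlgEquiv_comp_rename_inr K σ τ) g
  rw [← MulEquiv.irreducible_iff (sumAlgEquiv K σ τ), map_add, map_mul, hf', hg',
    sumAlgEquiv_C_inl]
  exact irreducible_map_mul_C_add_C hf
    (fun hu => hg (isUnit_iff_totalDegree_of_isReduced.mp hu).2) hsf ((Ne.isUnit hc).map C)

end MvPolynomial

/-- If `f ∈ F[X₁,…,Xₙ]` and `g ∈ F[Y₁,…,Yₘ]` are non-constant,
`c ∈ F` is nonzero, and `g` is square-free over the algebraic closure of `F`,
then `h(X,Y) = f(X)·g(Y) + c` (viewed in `F[X₁,…,Xₙ,Y₁,…,Yₘ]` via renaming into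
disjoint sets of variables) is absolutely irreducible, i.e. irreducible over the
algebraic closure of `F`. -/
theorem fg_plus_const_absolutely_irreducible {F : Type*} [Field F] {n m : ℕ}
    (f : MvPolynomial (Fin n) F) (g : MvPolynomial (Fin m) F) (c : F)
    (hf : 0 < f.totalDegree) (hg : 0 < g.totalDegree) (hc : c ≠ 0)
    (hsf : Squarefree (MvPolynomial.map (algebraMap F (AlgebraicClosure F)) g)) :
    Irreducible (MvPolynomial.map (algebraMap F (AlgebraicClosure F))
      ((MvPolynomial.rename (Sum.inl : Fin n → Fin n ⊕ Fin m) f) *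
        (MvPolynomial.rename (Sum.inr : Fin m → Fin n ⊕ Fin m) g) + MvPolynomial.C c)) := by
  have hφ := (algebraMap F (AlgebraicClosure F)).injective
  rw [map_add, map_mul, map_rename, map_rename, map_C]
  exact irreducible_rename_inl_mul_rename_inr_add_C
    ((totalDegree_map_of_injective hφ f).trans_ne hf.ne')
    ((totalDegree_map_of_injective hφ g).trans_ne hg.ne') hsf ((map_ne_zero_iff _ hφ).mpr hc)
end

section
/- Let (F, v) be a discretely valued field, e ≥ 1 an integer, π ∈ F with 0 < v(π) ≤ e, and a ∈ F with v(a) < 0. Then for every x ∈ F, v(a·π·x^{2^e} − x + a) ≤ v(a). In particular, if v(a·π·x^{2^e} − x + a) ≥ 0 for some x ∈ F, then v(a) ≥ 0. -/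
/-!
If `v x ≥ 0`, the terms `a π x^{2^e}` and `x` have valuation strictly above `v a`, so `a`
dominates and the valuation is exactly `v a`. If `v x < 0`, the leading term dominates: its
valuation `v a + v π + 2^e v x` lies below both `v x` and `v a` because `v π ≤ e < 2^e ≤ -2^e v x`.
-/

namespace AddValuation

section LinearOrderedAddCommMonoidWithTop

variable {R Γ : Type*} [Ring R] [LinearOrderedAddCommMonoidWithTop Γ] (v : AddValuation R Γ)
  {x y z : R}

theorem map_sub_add_eq_of_lt_left (hx : v y < v x) (hz : v y < v z) : v (y - x + z) = v y := by
  have hyx : v (y - x) = v y := v.map_sub_eq_of_lt_left hx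
  rw [v.map_add_eq_of_lt_left (hyx ▸ hz), hyx]

theorem map_sub_add_eq_of_lt_right (hx : v z < v x) (hy : v z < v y) : v (y - x + z) = v z :=
  v.map_add_eq_of_lt_right <| lt_of_lt_of_le (lt_min hy hx) (v.map_sub y x)

end LinearOrderedAddCommMonoidWithTop

section IntegerValued

variable {R : Type*} [Ring R] (v : AddValuation R (WithTop ℤ)) {a b x : R}

theorem lt_map_mul_mul_pow_of_nonneg (ha : v a ≠ ⊤) (hb : 0 < v b) (hx : 0 ≤ v x) (n : ℕ) :
    v a < v (a * b * x ^ n) := by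
  rw [v.map_mul, v.map_mul, v.map_pow]
  calc v a = v a + 0 := (add_zero _).symm
    _ < v a + v b := WithTop.add_lt_add_left ha hb
    _ ≤ v a + v b + n • v x := le_add_of_nonneg_right (nsmul_nonneg hx n)

theorem map_mul_mul_pow_two_pow_lt_of_neg {e : ℕ} (ha : v a < 0)
    (hb : v b ≤ ((e : ℤ) : WithTop ℤ)) (hx : v x < 0) :
    v (a * b * x ^ 2 ^ e) < v x ∧ v (a * b * x ^ 2 ^ e) < v a := by
  rw [v.map_mul, v.map_mul, v.map_pow]
  lift v a to ℤ using ha.ne_top with m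
  lift v b to ℤ using (hb.trans_lt (WithTop.coe_lt_top _)).ne with k
  lift v x to ℤ using hx.ne_top with n
  rw [← WithTop.coe_nsmul, ← WithTop.coe_add, ← WithTop.coe_add, WithTop.coe_lt_coe,
    WithTop.coe_lt_coe, nsmul_eq_mul, Nat.cast_pow, Nat.cast_ofNat]
  norm_cast at ha hb hx
  have h2e : (e : ℤ) + 1 ≤ 2 ^ e := by exact_mod_cast Nat.lt_two_pow_self
  constructor <;> nlinarith

end IntegerValued

end AddValuation

theorem val_D_le_general {F : Type*} [Field F] (v : AddValuation F (WithTop ℤ))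
    (e : ℕ) (π : F)
    (hπ0 : 0 < v π) (hπe : v π ≤ ((e : ℤ) : WithTop ℤ)) :
    ∀ a : F, (v a < 0 → ∀ x : F, v (a * π * x ^ 2 ^ e - x + a) ≤ v a) ∧
      (∀ x : F, 0 ≤ v (a * π * x ^ 2 ^ e - x + a) → 0 ≤ v a) := by
  have key : ∀ a, v a < 0 → ∀ x, v (a * π * x ^ 2 ^ e - x + a) ≤ v a := by
    intro a ha x
    rcases le_or_gt 0 (v x) with hx | hx
    · exact (v.map_sub_add_eq_of_lt_right (ha.trans_le hx)
        (v.lt_map_mul_mul_pow_of_nonneg ha.ne_top hπ0 hx _)).le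
    · obtain ⟨hlt_x, hlt_a⟩ := v.map_mul_mul_pow_two_pow_lt_of_neg ha hπe hx
      exact (v.map_sub_add_eq_of_lt_left hlt_x hlt_a).trans_le hlt_a.le
  exact fun a => ⟨key a, fun x h0 => not_lt.1 fun ha => (h0.trans (key a ha x)).not_gt ha⟩

/-- Let `(F, v)` be a discretely valued field, `e ≥ 1`, `π ∈ F` with
`0 < v(π) ≤ e`, and `a ∈ F` with `v(a) < 0`. Then for every `x ∈ F`,
`v(a·π·x^{2^e} − x + a) ≤ v(a)`; in particular, if `v(a·π·x^{2^e} − x + a) ≥ 0` for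
some `x`, then `v(a) ≥ 0`. -/
theorem val_D_le {F : Type*} [Field F] (v : AddValuation F (WithTop ℤ))
    (e : ℕ) (he : 1 ≤ e) (π : F)
    (hπ0 : 0 < v π) (hπe : v π ≤ ((e : ℤ) : WithTop ℤ)) :
    ∀ a : F, (v a < 0 → ∀ x : F, v (a * π * x ^ 2 ^ e - x + a) ≤ v a) ∧
      (∀ x : F, 0 ≤ v (a * π * x ^ 2 ^ e - x + a) → 0 ≤ v a) :=
  val_D_le_general v e π hπ0 hπe
end

section
/- Let (F, v) be a valued field with ring of integers O_v, let d ≥ 1, and suppose the residue field of v is a finite field 𝔽_{p^f} with d not dividing f. Then for every x ∈ F, v(Φ_{p^d−1}(x)) ≤ 0, where Φ_{p^d−1} is the (p^d−1)-th cyclotomic polynomial. -/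
/-!
For `x ∉ O` and monic `P` of positive degree, `P(x) ∈ O` would make `x` integral over the
integrally closed ring `O`; hence `P(x) ∉ O`, i.e. `P(x)⁻¹` lies in the maximal ideal. For `x ∈ O`,
`P(x)` is a unit unless the residue of `x` is a root of `P` mod the maximal ideal. For
`P = Φ_{p^d-1}` such a root would be a primitive `(p^d-1)`-th root of unity in `𝔽_{p^f}`, forcing
`p^d - 1 ∣ p^f - 1` and hence `d ∣ f`.
-/

open Polynomial

theorem Nat.dvd_of_pow_sub_one_dvd_pow_sub_one {a m n : ℕ} (ha : 1 < a)
    (h : a ^ m - 1 ∣ a ^ n - 1) : m ∣ n := by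
  have hgcd : a ^ m.gcd n - 1 = a ^ m - 1 := by
    rw [← Nat.pow_sub_one_gcd_pow_sub_one, Nat.gcd_eq_left h]
  have := Nat.one_le_pow (m.gcd n) a (by omega)
  have := Nat.one_le_pow m a (by omega)
  have hpow : a ^ m.gcd n = a ^ m := by omega
  rw [← Nat.pow_right_injective ha hpow]
  exact Nat.gcd_dvd_right m n

theorem FiniteField.dvd_card_sub_one_of_isRoot_cyclotomic {K : Type*} [Field K] [Finite K]
    {n : ℕ} [NeZero (n : K)] {μ : K} (h : (cyclotomic n K).IsRoot μ) : n ∣ Nat.card K - 1 := by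
  have := Fintype.ofFinite K
  have hμ : IsPrimitiveRoot μ n := isRoot_cyclotomic_iff.mp h
  rw [Nat.card_eq_fintype_card, ← hμ.pow_eq_one_iff_dvd]
  exact FiniteField.pow_card_sub_one_eq_one μ (hμ.ne_zero (NeZero.of_neZero_natCast K).out)

namespace ValuationSubring

variable {F : Type*} [Field F] (O : ValuationSubring F)

theorem mem_of_aeval_mem {P : O[X]} (hP : P.Monic) (hdeg : 0 < P.natDegree) {x : F}
    (hx : aeval x P ∈ O) : x ∈ O := by
  have hint : IsIntegral O x := by
    refine ⟨P - C ⟨_, hx⟩, hP.sub_of_left ?_, by simp [aeval_def]⟩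
    exact degree_C_le.trans_lt (by rwa [degree_eq_natDegree hP.ne_zero, Nat.cast_pos])
  obtain ⟨y, rfl⟩ := IsIntegrallyClosed.isIntegral_iff.mp hint
  exact y.2

theorem isUnit_eval_of_residue_ne_zero {P : O[X]} {y : O}
    (h : (P.map (IsLocalRing.residue O)).eval (IsLocalRing.residue O y) ≠ 0) :
    IsUnit (P.eval y) := by
  rw [eval_map, eval₂_at_apply] at h
  by_contra hu
  exact h ((IsLocalRing.residue_eq_zero_iff _).mpr hu)

theorem aeval_ne_zero_and_inv_aeval_mem {P : O[X]} (hP : P.Monic)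
    (hroot : ∀ a, ¬ (P.map (IsLocalRing.residue O)).IsRoot a) (x : F) :
    aeval x P ≠ 0 ∧ (aeval x P)⁻¹ ∈ O := by
  rcases P.natDegree.eq_zero_or_pos with hdeg | hdeg
  · simp [eq_one_of_monic_natDegree_zero hP hdeg]
  by_cases hx : x ∈ O
  · obtain ⟨u, hu⟩ := isUnit_eval_of_residue_ne_zero O (hroot (IsLocalRing.residue O ⟨x, hx⟩))
    have hval : aeval x P = algebraMap O F u := by
      rw [hu, ← coe_aeval_eq_eval, ← aeval_algebraMap_apply]
      rfl
    rw [hval, ← map_units_inv]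
    exact ⟨by simp, SetLike.coe_mem _⟩
  · have hnot : aeval x P ∉ O := fun h => hx (mem_of_aeval_mem O hP hdeg h)
    exact ⟨fun h0 => hnot (h0 ▸ zero_mem O), (O.mem_or_inv_mem _).resolve_left hnot⟩

end ValuationSubring

theorem val_cyclotomic_nonpos_general {F : Type*} [Field F]
    (O : ValuationSubring F) (p d f : ℕ) (hp : p.Prime) (hd : 0 < d)
    (hchar : CharP (IsLocalRing.ResidueField O) p)
    (hcard : Nat.card (IsLocalRing.ResidueField O) = p ^ f)
    (hdf : ¬ d ∣ f) :
    ∀ x : F, (Polynomial.cyclotomic (p ^ d - 1) F).eval x ≠ 0 ∧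
      ((Polynomial.cyclotomic (p ^ d - 1) F).eval x)⁻¹ ∈ O := by
  have : Finite (IsLocalRing.ResidueField O) :=
    Nat.finite_of_card_ne_zero (by rw [hcard]; exact pow_ne_zero f hp.ne_zero)
  have : NeZero ((p ^ d - 1 : ℕ) : IsLocalRing.ResidueField O) := by
    rw [neZero_iff, Nat.cast_sub (Nat.one_le_pow _ _ hp.pos), Nat.cast_pow, CharP.cast_eq_zero,
      zero_pow hd.ne', zero_sub, neg_ne_zero, Nat.cast_one]
    exact one_ne_zero
  have hroot (μ) : ¬ ((cyclotomic (p ^ d - 1) O).map (IsLocalRing.residue O)).IsRoot μ := by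
    intro hμ
    rw [map_cyclotomic] at hμ
    have hdvd := FiniteField.dvd_card_sub_one_of_isRoot_cyclotomic hμ
    rw [hcard] at hdvd
    exact hdf (Nat.dvd_of_pow_sub_one_dvd_pow_sub_one hp.one_lt hdvd)
  intro x
  simpa only [aeval_def, eval₂_eq_eval_map, map_cyclotomic] using
    O.aeval_ne_zero_and_inv_aeval_mem (cyclotomic.monic _ O) hroot x

/-- Let `(F, v)` be a valued field with valuation ring `O` whose residue
field is finite of characteristic `p`, of cardinality `p^f`, and let `d ≥ 1` with `d ∤ f`.
Then for every `x ∈ F` one has `v(Φ_{p^d−1}(x)) ≤ 0`, where `Φ_{p^d−1}` is the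
`(p^d−1)`-th cyclotomic polynomial; that is, `Φ_{p^d−1}(x)` is nonzero and its inverse
lies in `O`. -/
theorem val_cyclotomic_nonpos {F : Type*} [Field F]
    (O : ValuationSubring F) (p d f : ℕ) (hp : p.Prime) (hd : 0 < d) (hf : 0 < f)
    (hchar : CharP (IsLocalRing.ResidueField O) p)
    (hcard : Nat.card (IsLocalRing.ResidueField O) = p ^ f)
    (hdf : ¬ d ∣ f) :
    ∀ x : F, (Polynomial.cyclotomic (p ^ d - 1) F).eval x ≠ 0 ∧
      ((Polynomial.cyclotomic (p ^ d - 1) F).eval x)⁻¹ ∈ O :=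
  val_cyclotomic_nonpos_general O p d f hp hd hchar hcard hdf
end

section
/- Let (F, ≤) be an ordered field and a, u ∈ F with u ≠ 0. If there exist x, y ∈ F such that (y² + u²)·(1 + (x^{2^e} − π)·(x² + x + 2)·(x² − a)) = 1 + u², where π ∈ F satisfies π ≤ −1 and e ≥ 1, then a ≥ −u^{−2}. -/
/-!
The factor `(x ^ 2 ^ e - π) * (x ^ 2 + x + 2)` is at least `1`, so it can only enlarge a positive
`x ^ 2 - a`; dropping it and `y ^ 2` from the equation leaves `u ^ 2 * (1 + (x ^ 2 - a)) ≤ 1 + u ^ 2`,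
that is `x ^ 2 - a ≤ u⁻²`.
-/

section OrderedField

variable {F : Type*} [Field F] [LinearOrder F] [IsStrictOrderedRing F]

theorem one_lt_sq_add_self_add_two (x : F) : 1 < x ^ 2 + x + 2 := by
  nlinarith [sq_nonneg (2 * x + 1)]

theorem one_le_pow_two_pow_sub {e : ℕ} (he : e ≠ 0) {π : F} (hπ : π ≤ -1) (x : F) :
    1 ≤ x ^ 2 ^ e - π := by
  have : 0 ≤ x ^ 2 ^ e := (Nat.even_pow.mpr ⟨even_two, he⟩).pow_nonneg x
  linarith

theorem le_inv_sq_of_add_sq_mul_eq {s u c t : F} (hs : 0 ≤ s) (hu : u ≠ 0) (hc : 1 ≤ c)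
    (h : (s + u ^ 2) * (1 + c * t) = 1 + u ^ 2) : t ≤ (u ^ 2)⁻¹ := by
  rcases le_or_gt t 0 with ht | ht
  · exact ht.trans (by positivity)
  have hu2 : 0 < u ^ 2 := by positivity
  have hct : t ≤ c * t := le_mul_of_one_le_left ht.le hc
  have hbound : u ^ 2 * (1 + t) ≤ 1 + u ^ 2 :=
    calc u ^ 2 * (1 + t) ≤ (s + u ^ 2) * (1 + c * t) :=
          mul_le_mul (by linarith) (by linarith) (by linarith) (by linarith)
      _ = 1 + u ^ 2 := h
  rw [← one_div, le_div_iff₀ hu2]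
  linarith

end OrderedField

/-- Let `(F, ≤)` be an ordered field, `e ≥ 1`, `π ∈ F` with `π ≤ −1`,
`a ∈ F` and `u ∈ F` with `u ≠ 0`. If there exist `x, y ∈ F` such that
`(y² + u²)·(1 + (x^{2^e} − π)·(x² + x + 2)·(x² − a)) = 1 + u²`, then `a ≥ −u⁻²`. -/
theorem ge_neg_inv_sq_of_eq {F : Type*} [Field F] [LinearOrder F] [IsStrictOrderedRing F]
    (e : ℕ) (he : 1 ≤ e) (π a u : F) (hπ : π ≤ -1) (hu : u ≠ 0)
    (h : ∃ x y : F,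
      (y ^ 2 + u ^ 2) * (1 + (x ^ 2 ^ e - π) * (x ^ 2 + x + 2) * (x ^ 2 - a)) = 1 + u ^ 2) :
    -(u ^ 2)⁻¹ ≤ a := by
  obtain ⟨x, y, hxy⟩ := h
  have hfactor : 1 ≤ (x ^ 2 ^ e - π) * (x ^ 2 + x + 2) :=
    one_le_mul_of_one_le_of_one_le (one_le_pow_two_pow_sub (by omega) hπ x)
      (one_lt_sq_add_self_add_two x).le
  have hbound := le_inv_sq_of_add_sq_mul_eq (sq_nonneg y) hu hfactor hxy
  linarith [sq_nonneg x]
end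

section
/- Let F be a field, 𝒮 a set of valuations on F, and for each valuation w ∈ 𝒮 let O_w be its valuation ring. Fix π ∈ F with 0 < w(π) ≤ e for all w ∈ 𝒮 (e ≥ 1 a fixed integer, all w discrete normalized with ℤ convex in the value group). Then for all a, b ∈ F: {w ∈ 𝒮 : w(a) ≥ 0} ∩ {w ∈ 𝒮 : w(b) ≥ 0} = {w ∈ 𝒮 : w(a^{2^e} + π·b^{2^e}) ≥ 0}. -/
/-!
Write `n = 2^e` and `c = w(π)`, so `0 < c ≤ e < n`. The valuations of the two summands are
`n • w(a)` and `c + n • w(b)`. They cannot be equal unless both are `⊤`, because `n` does not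
divide `c`; hence `w(a^n + π b^n)` is their minimum, which is nonnegative exactly when `w(a)` and
`w(b)` are, again because `0 ≤ c < n`.
-/

namespace WithTop

lemma nonneg_of_nonneg_add_nsmul {n : ℕ} {c : ℤ} (hcn : c < n) {y : WithTop ℤ}
    (h : 0 ≤ (c : WithTop ℤ) + n • y) : 0 ≤ y := by
  induction y with
  | top => exact le_top
  | coe k =>
    rw [← coe_nsmul, ← coe_add, ← coe_zero, coe_le_coe] at h
    rw [← coe_zero, coe_le_coe]
    by_contra! hk
    nlinarith [nsmul_eq_mul n k]

lemma eq_top_of_nsmul_eq_add_nsmul {n : ℕ} {c : ℤ} (hc : 0 < c) (hcn : c < n)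
    {x y : WithTop ℤ} (h : n • x = (c : WithTop ℤ) + n • y) : x = ⊤ ∧ y = ⊤ := by
  have htop : n • (⊤ : WithTop ℤ) = ⊤ := by
    obtain ⟨k, rfl⟩ := Nat.exists_eq_succ_of_ne_zero (by omega : n ≠ 0)
    rw [succ_nsmul, add_top]
  induction x with
  | top =>
    induction y with
    | top => exact ⟨rfl, rfl⟩
    | coe k =>
      rw [htop, ← coe_nsmul, ← coe_add] at h
      exact absurd h top_ne_coe
  | coe m =>
    induction y with
    | top =>
      rw [htop, add_top, ← coe_nsmul] at h
      exact absurd h coe_ne_top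
    | coe k =>
      rw [← coe_nsmul, ← coe_nsmul, ← coe_add, coe_eq_coe, nsmul_eq_mul, nsmul_eq_mul] at h
      have hdvd : (n : ℤ) ∣ c := ⟨m - k, by linarith⟩
      exact absurd (Int.le_of_dvd hc hdvd) (by omega)

end WithTop

namespace AddValuation

lemma nonneg_add_mul_pow_iff {R : Type*} [Ring R] (w : AddValuation R (WithTop ℤ)) {n : ℕ}
    {π : R} (hπ0 : 0 < w π) (hπn : w π < n) (a b : R) :
    0 ≤ w (a ^ n + π * b ^ n) ↔ 0 ≤ w a ∧ 0 ≤ w b := by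
  lift w π to ℤ using hπn.ne_top with c hc
  have hc0 : 0 < c := by exact_mod_cast hπ0
  have hcn : c < n := by exact_mod_cast hπn
  have ha : w (a ^ n) = n • w a := w.map_pow a n
  have hb : w (π * b ^ n) = c + n • w b := by rw [w.map_mul, w.map_pow, ← hc]
  constructor
  · intro hsum
    by_cases heq : w (a ^ n) = w (π * b ^ n)
    · rw [ha, hb] at heq
      obtain ⟨hat, hbt⟩ := WithTop.eq_top_of_nsmul_eq_add_nsmul hc0 hcn heq
      simp [hat, hbt]
    · rw [w.map_add_of_distinct_val heq, le_min_iff, ha, hb] at hsum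
      refine ⟨WithTop.nonneg_of_nonneg_add_nsmul (c := 0) (hc0.trans hcn) ?_,
        WithTop.nonneg_of_nonneg_add_nsmul hcn hsum.2⟩
      simpa using hsum.1
  · rintro ⟨ha0, hb0⟩
    refine w.map_le_add (ha ▸ nsmul_nonneg ha0 n) ?_
    rw [hb]
    exact add_nonneg (by exact_mod_cast hc0.le) (nsmul_nonneg hb0 n)

end AddValuation

theorem H_inter_H_general {F : Type*} [Field F] (𝒮 : Set (AddValuation F (WithTop ℤ)))
    (e : ℕ) (π : F)
    (hπ : ∀ w ∈ 𝒮, 0 < w π ∧ w π ≤ ((e : ℤ) : WithTop ℤ)) :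
    ∀ a b : F,
      ({w ∈ 𝒮 | 0 ≤ w a} ∩ {w ∈ 𝒮 | 0 ≤ w b}) =
        {w ∈ 𝒮 | 0 ≤ w (a ^ 2 ^ e + π * b ^ 2 ^ e)} := by
  intro a b
  ext w
  simp only [Set.mem_inter_iff, Set.mem_ofPred_eq]
  by_cases hw : w ∈ 𝒮
  · obtain ⟨hπ0, hπe⟩ := hπ w hw
    have hπn : w π < ((2 ^ e : ℕ) : WithTop ℤ) :=
      hπe.trans_lt <| by
        rw [← WithTop.coe_natCast, WithTop.coe_lt_coe]
        exact_mod_cast e.lt_two_pow_self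
    simp only [hw, true_and, w.nonneg_add_mul_pow_iff hπ0 hπn]
  · simp [hw]

/-- Let `F` be a field, `𝒮` a set of (discrete, normalized) valuations on
`F`, `e ≥ 1`, and `π ∈ F` with `0 < w(π) ≤ e` for all `w ∈ 𝒮`. Then for all `a, b ∈ F`:
`{w ∈ 𝒮 : w(a) ≥ 0} ∩ {w ∈ 𝒮 : w(b) ≥ 0} = {w ∈ 𝒮 : w(a^{2^e} + π·b^{2^e}) ≥ 0}`. -/
theorem H_inter_H {F : Type*} [Field F] (𝒮 : Set (AddValuation F (WithTop ℤ)))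
    (e : ℕ) (he : 1 ≤ e) (π : F)
    (hπ : ∀ w ∈ 𝒮, 0 < w π ∧ w π ≤ ((e : ℤ) : WithTop ℤ)) :
    ∀ a b : F,
      ({w ∈ 𝒮 | 0 ≤ w a} ∩ {w ∈ 𝒮 | 0 ≤ w b}) =
        {w ∈ 𝒮 | 0 ≤ w (a ^ 2 ^ e + π * b ^ 2 ^ e)} :=
  H_inter_H_general 𝒮 e π hπ
end

section
/- Let F be a field, e ≥ 1, and w a discrete valuation on F with 0 < w(π) ≤ e. Then for every a ∈ F×: w(a) ≥ 0 if and only if w((π·a^{2^e})^{−1}) < 0. Equivalently, the complement of the set {w : w(a) ≥ 0} within a family of such valuations equals {w : w((π·a^{2^e})^{−1}) ≥ 0}. -/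
/-! Write `w π = m` and `w a = n` with `m, n ∈ ℤ`, so that `w ((π * a ^ 2 ^ e)⁻¹) = -(m + 2 ^ e * n)`.
As `0 < m ≤ e < 2 ^ e`, the integer `m + 2 ^ e * n` is at least `m > 0` when `n ≥ 0`, and at most
`m - 2 ^ e < 0` when `n ≤ -1`. -/

theorem Int.nonneg_iff_pos_add_mul {m k n : ℤ} (hm : 0 < m) (hmk : m < k) :
    0 ≤ n ↔ 0 < m + k * n := by
  constructor
  · intro hn
    have : 0 ≤ k * n := mul_nonneg (by omega) hn
    omega
  · intro h
    by_contra! hn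
    have : k * n ≤ -k := by nlinarith
    omega

theorem val_nonneg_iff_inv_neg_general {F : Type*} [Field F] (w : AddValuation F (WithTop ℤ))
    (e : ℕ) (π : F)
    (hπ0 : 0 < w π) (hπe : w π ≤ ((e : ℤ) : WithTop ℤ)) :
    ∀ a : F, a ≠ 0 → (0 ≤ w a ↔ w ((π * a ^ 2 ^ e)⁻¹) < 0) := by
  intro a ha
  obtain ⟨m, hm⟩ := WithTop.ne_top_iff_exists.mp (ne_top_of_le_ne_top WithTop.coe_ne_top hπe)
  obtain ⟨n, hn⟩ := WithTop.ne_top_iff_exists.mp (w.ne_top_iff.mpr ha)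
  rw [← hm, WithTop.coe_pos] at hπ0
  rw [← hm, WithTop.coe_le_coe] at hπe
  have hm_lt : m < 2 ^ e := hπe.trans_lt (mod_cast e.lt_two_pow_self)
  rw [w.map_inv, w.map_mul, w.map_pow, ← hm, ← hn]
  norm_cast
  rw [Int.nonneg_iff_pos_add_mul hπ0 hm_lt, Left.neg_neg_iff, nsmul_eq_mul, Nat.cast_pow,
    Nat.cast_ofNat]

/-- Let `F` be a field, `e ≥ 1`, and `w` a discrete valuation on `F` with
`0 < w(π) ≤ e`. Then for every `a ∈ F×`: `w(a) ≥ 0` if and only if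
`w((π·a^{2^e})⁻¹) < 0`. -/
theorem val_nonneg_iff_inv_neg {F : Type*} [Field F] (w : AddValuation F (WithTop ℤ))
    (e : ℕ) (he : 1 ≤ e) (π : F)
    (hπ0 : 0 < w π) (hπe : w π ≤ ((e : ℤ) : WithTop ℤ)) :
    ∀ a : F, a ≠ 0 → (0 ≤ w a ↔ w ((π * a ^ 2 ^ e)⁻¹) < 0) :=
  val_nonneg_iff_inv_neg_general w e π hπ0 hπe
end

section
/- Let F be a real closed field, and a, b ∈ F×. Then the polynomial f(X,Y) = a·b·X²·Y² + a·X² + b·Y² − 1 has a zero in F². -/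
/-! Write `f = a·X²·(b·Y² + 1) + (b·Y² − 1)`. If `a > 0`, take `y = 0` and `x = 1/√a`. If `a < 0`,
choose `y` with `|b·y²| > 1`, so that `t = b·y²` makes `(1 − t)/(1 + t)` negative; then
`a·x² = (1 − t)/(1 + t)` is solvable because non-negative elements are squares. -/

theorem exists_mul_sq_eq_of_nonneg_div {F : Type*} [Field F] [LE F]
    (hsq : ∀ z : F, 0 ≤ z → ∃ w : F, w ^ 2 = z) {c d : F} (hd : d ≠ 0) (h : 0 ≤ c / d) : ∃ x : F, d * x ^ 2 = c := by
  obtain ⟨x, hx⟩ := hsq (c / d) h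
  exact ⟨x, by rw [hx]; field_simp⟩

section

variable {F : Type*} [Field F] [LinearOrder F] [IsStrictOrderedRing F]

theorem one_lt_abs_mul_sq_one_add_inv_abs {b : F} (hb : b ≠ 0) :
    1 < |b * (1 + |b|⁻¹) ^ 2| := by
  have hb' : 0 < |b| := abs_pos.mpr hb
  have h : |b| * (1 + |b|⁻¹) ^ 2 = |b| + 2 + |b|⁻¹ := by field_simp; ring
  rw [abs_mul, abs_sq, h]
  have := inv_pos.mpr hb'
  linarith

theorem one_sub_div_one_add_neg_of_one_lt_abs {t : F} (ht : 1 < |t|) :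
    (1 - t) / (1 + t) < 0 := by
  rcases lt_abs.mp ht with ht | ht
  · exact div_neg_of_neg_of_pos (by linarith) (by linarith)
  · exact div_neg_of_pos_of_neg (by linarith) (by linarith)

end

theorem f_has_zero_of_real_closed_general {F : Type*} [Field F] [LinearOrder F] [IsStrictOrderedRing F]
    (hsq : ∀ z : F, 0 ≤ z → ∃ w : F, w ^ 2 = z)
    (a b : F) (ha : a ≠ 0) (hb : b ≠ 0) :
    ∃ x y : F, a * b * x ^ 2 * y ^ 2 + a * x ^ 2 + b * y ^ 2 - 1 = 0 := by
  rcases ha.lt_or_gt with ha | ha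
  · set y := 1 + |b|⁻¹
    have hy : 1 < |b * y ^ 2| := one_lt_abs_mul_sq_one_add_inv_abs hb
    have hneg := one_sub_div_one_add_neg_of_one_lt_abs hy
    have hden : 1 + b * y ^ 2 ≠ 0 := fun h => by simp [h] at hneg
    obtain ⟨x, hx⟩ :=
      exists_mul_sq_eq_of_nonneg_div hsq ha.ne (div_nonneg_of_nonpos hneg.le ha.le)
    refine ⟨x, y, ?_⟩
    have hax : a * x ^ 2 * (1 + b * y ^ 2) = 1 - b * y ^ 2 := by
      rw [hx, div_mul_cancel₀ _ hden]
    linear_combination hax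
  · obtain ⟨x, hx⟩ := exists_mul_sq_eq_of_nonneg_div hsq ha.ne' (c := 1) (by positivity)
    exact ⟨x, 0, by linear_combination hx⟩

/-- Let `F` be a real closed field (an ordered field in which every
non-negative element is a square and every polynomial of odd degree has a root), and
`a, b ∈ F×`. Then `f(X,Y) = a·b·X²·Y² + a·X² + b·Y² − 1` has a zero in `F²`. -/
theorem f_has_zero_of_real_closed {F : Type*} [Field F] [LinearOrder F] [IsStrictOrderedRing F]
    (hsq : ∀ z : F, 0 ≤ z → ∃ w : F, w ^ 2 = z)
    (hodd : ∀ q : Polynomial F, Odd q.natDegree → ∃ r : F, q.eval r = 0)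
    (a b : F) (ha : a ≠ 0) (hb : b ≠ 0) :
    ∃ x y : F, a * b * x ^ 2 * y ^ 2 + a * x ^ 2 + b * y ^ 2 - 1 = 0 :=
  f_has_zero_of_real_closed_general hsq a b ha hb
end

section
/- Let F be a field equipped with a set 𝒮 of valuations, all with residue characteristic a fixed prime p, satisfying: there exists e ≥ 1 and π ∈ F with 0 < w(π) ≤ e < 2^e for all w ∈ 𝒮. Then the collection of subsets of 𝒮 of the form H(a) = {w ∈ 𝒮 : w(a) ≥ 0}, a ∈ F, forms a Boolean subalgebra of the power set of 𝒮: it is closed under finite intersections and complements (assuming H(1) = 𝒮 is included). -/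
/-!
Fix `N` with `0 < w π < N` for every `w ∈ 𝒮` (here `N = e + 1`). The values `N • w a` and
`w π + N • w b` of `a ^ N` and `π * b ^ N` differ modulo `N`, so `w (a ^ N + π * b ^ N)` is their
minimum, which is negative exactly when `w a < 0` or `w b < 0`. Similarly
`w (π * a ^ N) = w π + N • w a` is positive when `w a ≥ 0` and at most `w π - N < 0` otherwise,
so inverting it swaps `H(a)` with its complement; for `a = 0` the complement is empty, as is
`H(π⁻¹)`.
-/

namespace WithTop

theorem add_nsmul_neg {t x : WithTop ℤ} {N : ℕ} (htN : t < N) (hx : x < 0) :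
    t + N • x < 0 := by
  lift t to ℤ using htN.ne_top
  lift x to ℤ using hx.ne_top
  norm_cast at htN hx ⊢
  rw [nsmul_eq_mul]
  nlinarith

theorem nsmul_ne_add_nsmul {t x y : WithTop ℤ} {N : ℕ} (ht : 0 < t) (htN : t < N)
    (hxy : x ≠ ⊤ ∨ y ≠ ⊤) : N • x ≠ t + N • y := by
  lift t to ℤ using htN.ne_top
  norm_cast at ht htN
  have hN : N • (⊤ : WithTop ℤ) = ⊤ := by
    obtain ⟨n, rfl⟩ := Nat.exists_eq_succ_of_ne_zero (by omega : N ≠ 0)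
    rw [succ_nsmul, add_top]
  induction x using WithTop.recTopCoe <;> induction y using WithTop.recTopCoe
  · simp at hxy
  · rw [hN, ← coe_nsmul, ← coe_add]
    exact top_ne_coe
  · rw [hN, add_top, ← coe_nsmul]
    exact coe_ne_top
  · rename_i m n
    norm_cast
    rw [nsmul_eq_mul, nsmul_eq_mul]
    intro h
    -- equality would force `N ∣ t`, impossible for `0 < t < N`
    have hdvd : (N : ℤ) ∣ t := ⟨m - n, by linarith [mul_sub (N : ℤ) m n]⟩
    exact (Int.le_of_dvd ht hdvd).not_gt htN

end WithTop

namespace AddValuation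

theorem nonneg_inv_iff {K : Type*} [DivisionRing K] (v : AddValuation K (WithTop ℤ)) {x : K}
    (hx : x ≠ 0) : 0 ≤ v x⁻¹ ↔ v x ≤ 0 := by
  rw [v.map_inv]
  lift v x to ℤ using v.ne_top_iff.mpr hx with m
  norm_cast
  omega

theorem nonneg_pow_add_mul_pow_iff {R : Type*} [Ring R] (v : AddValuation R (WithTop ℤ))
    {π : R} {N : ℕ} (hπ : 0 < v π) (hπN : v π < N) (a b : R) :
    0 ≤ v (a ^ N + π * b ^ N) ↔ 0 ≤ v a ∧ 0 ≤ v b := by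
  refine ⟨fun h => ?_, fun ⟨ha, hb⟩ => ?_⟩
  · by_contra hab
    have hneg : v a < 0 ∨ v b < 0 := by simpa only [not_and_or, not_le] using hab
    have hdist : v (a ^ N) ≠ v (π * b ^ N) := by
      rw [v.map_pow, v.map_mul, v.map_pow]
      exact WithTop.nsmul_ne_add_nsmul hπ hπN (hneg.imp LT.lt.ne_top LT.lt.ne_top)
    rw [v.map_add_of_distinct_val hdist, v.map_pow, v.map_mul, v.map_pow] at h
    rcases hneg with ha | hb
    · have hN : N ≠ 0 := by
        rintro rfl
        exact (hπ.trans hπN).not_ge (by simp)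
      exact (h.trans (min_le_left _ _)).not_gt (nsmul_neg ha hN)
    · exact (h.trans (min_le_right _ _)).not_gt (WithTop.add_nsmul_neg hπN hb)
  · refine le_trans (le_min ?_ ?_) (v.map_add _ _)
    · rw [v.map_pow]
      exact nsmul_nonneg ha N
    · rw [v.map_mul, v.map_pow]
      exact add_nonneg hπ.le (nsmul_nonneg hb N)

theorem nonneg_inv_mul_pow_iff {K : Type*} [DivisionRing K] (v : AddValuation K (WithTop ℤ))
    {π : K} {N : ℕ} (hπ : 0 < v π) (hπN : v π < N) {a : K} (ha : a ≠ 0) :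
    0 ≤ v (π * a ^ N)⁻¹ ↔ v a < 0 := by
  have hπ0 : π ≠ 0 := v.ne_top_iff.mp hπN.ne_top
  rw [v.nonneg_inv_iff (mul_ne_zero hπ0 (pow_ne_zero N ha)), v.map_mul, v.map_pow]
  refine ⟨fun h => ?_, fun h => (WithTop.add_nsmul_neg hπN h).le⟩
  by_contra! ha
  exact h.not_gt (add_pos_of_pos_of_nonneg hπ (nsmul_nonneg ha N))

end AddValuation

theorem H_family_boolean_algebra_general {F : Type*} [Field F]
    (𝒮 : Set (AddValuation F (WithTop ℤ)))
    (e : ℕ) (π : F)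
    (hπ : ∀ w ∈ 𝒮, 0 < w π ∧ w π ≤ ((e : ℤ) : WithTop ℤ)) :
    ({w ∈ 𝒮 | 0 ≤ w 1} = 𝒮) ∧
    (∀ a b : F, ∃ c : F, {w ∈ 𝒮 | 0 ≤ w a} ∩ {w ∈ 𝒮 | 0 ≤ w b} = {w ∈ 𝒮 | 0 ≤ w c}) ∧
    (∀ a : F, ∃ c : F, 𝒮 \ {w ∈ 𝒮 | 0 ≤ w a} = {w ∈ 𝒮 | 0 ≤ w c}) := by
  have hπN : ∀ w ∈ 𝒮, w π < (e + 1 : ℕ) :=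
    fun w hw => (hπ w hw).2.trans_lt (by norm_cast; omega)
  refine ⟨by simp, fun a b => ⟨a ^ (e + 1) + π * b ^ (e + 1), ?_⟩, fun a => ?_⟩
  · ext w
    by_cases hw : w ∈ 𝒮
    · simp [hw, w.nonneg_pow_add_mul_pow_iff (hπ w hw).1 (hπN w hw)]
    · simp [hw]
  by_cases ha : a = 0
  · refine ⟨π⁻¹, ?_⟩
    ext w
    by_cases hw : w ∈ 𝒮
    · have hπ0 : π ≠ 0 := w.ne_top_iff.mp (hπN w hw).ne_top
      have hπinv : ¬0 ≤ w π⁻¹ := by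
        rw [w.nonneg_inv_iff hπ0]
        exact (hπ w hw).1.not_ge
      simp only [Set.mem_sdiff, Set.mem_sep_iff, hw, true_and, ha, w.map_zero, le_top,
        not_true_eq_false, hπinv]
    · simp [hw]
  · refine ⟨(π * a ^ (e + 1))⁻¹, ?_⟩
    ext w
    by_cases hw : w ∈ 𝒮
    · simp only [Set.mem_sdiff, Set.mem_sep_iff, hw, true_and, not_le,
        w.nonneg_inv_mul_pow_iff (hπ w hw).1 (hπN w hw) ha]
    · simp [hw]

/-- Let `F` be a field and `𝒮` a set of (discrete, normalized) valuations
on `F`, all of residue characteristic a fixed prime `p` (i.e. `w(p) > 0`), and suppose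
there are `e ≥ 1` and `π ∈ F` with `0 < w(π) ≤ e` for all `w ∈ 𝒮`. Then the collection of
sets `H(a) = {w ∈ 𝒮 : w(a) ≥ 0}`, `a ∈ F`, forms a Boolean subalgebra of the power set of
`𝒮`: it contains `𝒮 = H(1)` and is closed under finite intersections and complements. -/
theorem H_family_boolean_algebra {F : Type*} [Field F]
    (𝒮 : Set (AddValuation F (WithTop ℤ))) (p : ℕ) (hp : p.Prime)
    (hres : ∀ w ∈ 𝒮, 0 < w (p : F))
    (e : ℕ) (he : 1 ≤ e) (π : F)
    (hπ : ∀ w ∈ 𝒮, 0 < w π ∧ w π ≤ ((e : ℤ) : WithTop ℤ)) :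
    ({w ∈ 𝒮 | 0 ≤ w 1} = 𝒮) ∧
    (∀ a b : F, ∃ c : F, {w ∈ 𝒮 | 0 ≤ w a} ∩ {w ∈ 𝒮 | 0 ≤ w b} = {w ∈ 𝒮 | 0 ≤ w c}) ∧
    (∀ a : F, ∃ c : F, 𝒮 \ {w ∈ 𝒮 | 0 ≤ w a} = {w ∈ 𝒮 | 0 ≤ w c}) :=
  H_family_boolean_algebra_general 𝒮 e π hπ
end
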